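/- Let T > 0, δ > 0, M > 0. Let R : [0,T] → ℝ^{k×k} be measurable with R(t) symmetric, ‖R(t)‖ ≤ M, and in block form R(t) = [[R₁₁(t), R₂₁(t)ᵀ],[R₂₁(t), R₂₂(t)]] satisfying R₁₁(t) + δI negative semidefinite and S₁(t) − δI positive semidefinite for a.e. t ∈ [0,T], where S₁(t) := R₂₂(t) − R₂₁(t)R₁₁(t)⁻¹R₂₁(t)ᵀ. Let Δ = (Δ₁, Δ₂) ∈ L²(0,T; ℝ^k). Then R(t) is invertible for a.e. t, the function u*(t) := −R(t)⁻¹Δ(t) belongs to L²(0,T; ℝ^k), and, writing u* = (u₁*, u₂*), the functional F(u₁,u₂) := ∫₀ᵀ (⟨R(t)u(t), u(t)⟩ + 2⟨Δ(t), u(t)⟩) dt satisfies: for every u₁ ∈ L²(0,T; ℝ^{k₁}) and u₂ ∈ L²(0,T; ℝ^{k₂}), F(u₁, u₂*) ≤ F(u₁*, u₂*) ≤ F(t ↦ −R₁₁(t)⁻¹(R₂₁(t)ᵀu₂(t) + Δ₁(t)), u₂), and F(u₁*, u₂*) = −∫₀ᵀ ⟨R(t)⁻¹Δ(t), Δ(t)⟩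 dt. (Deterministic L² form of the saddle point property established in the completion-of-squares argument of Section 5 and in Theorem 1 of the paper.) -/

import Mathlib

/-!
Completing the square. Since `R` is symmetric and `R u* = -Δ`, the integrand satisfies
`q(v) = q(u*) + ⟨R (v - u*), v - u*⟩`, and the Schur decomposition writes
`⟨R (a, b), (a, b)⟩ = ⟨R₁₁ w, w⟩ + ⟨S₁ b, b⟩` with `w = a + R₁₁⁻¹ R₂₁ᵀ b`. Perturbing only `u₁`
gives `b = 0`, `w = a` and a nonpositive excess; the response to `u₂` is chosen so that `w = 0`,
leaving `⟨S₁ b, b⟩ ≥ 0`. The uniform bounds `-R₁₁ ≥ δ`, `S₁ ≥ δ`, `‖R‖ ≤ M` bound `‖R(t)⁻¹‖` and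
`‖R₁₁(t)⁻¹‖` uniformly in `t`, so all controls involved are in `L²` and all integrands integrable.
-/

open Matrix MeasureTheory
open scoped Matrix.Norms.L2Operator
open WithLp

namespace Matrix

lemma posDef_of_posSemidef_sub {ι : Type*} [DecidableEq ι] {δ : ℝ} (hδ : 0 < δ) {A : Matrix ι ι ℝ}
    (h : (A - δ • 1).PosSemidef) : A.PosDef := by
  simpa using PosDef.posSemidef_add h (PosDef.one.smul hδ)

lemma posSemidef_neg_of_neg_add_posSemidef {ι : Type*} [DecidableEq ι] {δ : ℝ} (hδ : 0 < δ)
    {A : Matrix ι ι ℝ} (hA : (-(A + δ • 1)).PosSemidef) : (-A).PosSemidef :=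
  (posDef_of_posSemidef_sub hδ (by rwa [← neg_add'])).posSemidef

lemma norm_toLp_mulVec_le {m n : Type*} [Fintype m] [Fintype n] [DecidableEq n]
    (A : Matrix m n ℝ) (x : n → ℝ) : ‖toLp 2 (A *ᵥ x)‖ ≤ ‖A‖ * ‖toLp 2 x‖ :=
  A.l2_opNorm_mulVec (toLp 2 x)

lemma l2_opNorm_le_of_norm_mulVec_le {m n : Type*} [Fintype m] [Fintype n] [DecidableEq n]
    {A : Matrix m n ℝ} {c : ℝ} (hc : 0 ≤ c)
    (h : ∀ x, ‖toLp 2 (A *ᵥ x)‖ ≤ c * ‖toLp 2 x‖) : ‖A‖ ≤ c := by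
  rw [l2_opNorm_def]
  exact ContinuousLinearMap.opNorm_le_bound _ hc fun x => h x

variable {ι κ : Type*} [Fintype ι] [Fintype κ]

lemma dotProduct_self_eq_norm_toLp_sq (x : ι → ℝ) : x ⬝ᵥ x = ‖toLp 2 x‖ ^ 2 := by
  rw [← real_inner_self_eq_norm_sq, EuclideanSpace.inner_toLp_toLp]; simp

lemma abs_dotProduct_le (x y : ι → ℝ) : |x ⬝ᵥ y| ≤ ‖toLp 2 x‖ * ‖toLp 2 y‖ := by
  have := abs_real_inner_le_norm (toLp 2 x) (toLp 2 y)
  rwa [EuclideanSpace.inner_toLp_toLp, star_trivial, dotProduct_comm] at this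

lemma norm_toLp_sumElim_sq (x : ι → ℝ) (y : κ → ℝ) :
    ‖toLp 2 (Sum.elim x y)‖ ^ 2 = ‖toLp 2 x‖ ^ 2 + ‖toLp 2 y‖ ^ 2 := by
  simp only [← dotProduct_self_eq_norm_toLp_sq, dotProduct, Fintype.sum_sum_type, Sum.elim_inl,
    Sum.elim_inr]

lemma norm_toLp_comp_inl_le (y : ι ⊕ κ → ℝ) : ‖toLp 2 (y ∘ Sum.inl)‖ ≤ ‖toLp 2 y‖ := by
  refine (pow_le_pow_iff_left₀ (norm_nonneg _) (norm_nonneg _) two_ne_zero).1 ?_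
  rw [← Sum.elim_comp_inl_inr y, norm_toLp_sumElim_sq, Sum.elim_comp_inl]
  exact le_add_of_nonneg_right (sq_nonneg _)

lemma norm_toLp_comp_inr_le (y : ι ⊕ κ → ℝ) : ‖toLp 2 (y ∘ Sum.inr)‖ ≤ ‖toLp 2 y‖ := by
  refine (pow_le_pow_iff_left₀ (norm_nonneg _) (norm_nonneg _) two_ne_zero).1 ?_
  rw [← Sum.elim_comp_inl_inr y, norm_toLp_sumElim_sq, Sum.elim_comp_inr]
  exact le_add_of_nonneg_left (sq_nonneg _)

lemma norm_toLp_le_add (y : ι ⊕ κ → ℝ) :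
    ‖toLp 2 y‖ ≤ ‖toLp 2 (y ∘ Sum.inl)‖ + ‖toLp 2 (y ∘ Sum.inr)‖ := by
  refine (pow_le_pow_iff_left₀ (norm_nonneg _) (by positivity) two_ne_zero).1 ?_
  conv_lhs => rw [← Sum.elim_comp_inl_inr y, norm_toLp_sumElim_sq]
  nlinarith [norm_nonneg (toLp 2 (y ∘ Sum.inl)), norm_nonneg (toLp 2 (y ∘ Sum.inr))]

lemma norm_toLp_sumElim_zero_left (y : κ → ℝ) :
    ‖toLp 2 (Sum.elim (0 : ι → ℝ) y)‖ = ‖toLp 2 y‖ := by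
  rw [← sq_eq_sq₀ (norm_nonneg _) (norm_nonneg _), norm_toLp_sumElim_sq]
  simp

def lqCost (R : Matrix ι ι ℝ) (Δ v : ι → ℝ) : ℝ := (R *ᵥ v) ⬝ᵥ v + 2 * (Δ ⬝ᵥ v)

lemma lqCost_eq_of_mulVec_eq_neg {R : Matrix ι ι ℝ} {Δ u : ι → ℝ} (hu : R *ᵥ u = -Δ) :
    lqCost R Δ u = Δ ⬝ᵥ u := by
  rw [lqCost, hu, neg_dotProduct]; ring

lemma lqCost_eq_add_of_mulVec_eq_neg {R : Matrix ι ι ℝ} (hR : R.IsSymm) {Δ u : ι → ℝ}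
    (hu : R *ᵥ u = -Δ) (v : ι → ℝ) :
    lqCost R Δ v = lqCost R Δ u + (R *ᵥ (v - u)) ⬝ᵥ (v - u) := by
  have hRvu : (R *ᵥ v) ⬝ᵥ u = -(Δ ⬝ᵥ v) := by
    rw [dotProduct_comm, dotProduct_mulVec, ← mulVec_transpose, hR.eq, hu, neg_dotProduct]
  simp only [lqCost, mulVec_sub, sub_dotProduct, dotProduct_sub, hRvu, hu, neg_dotProduct]
  ring

variable [DecidableEq ι]

lemma mulVec_inv_mulVec {R : Matrix ι ι ℝ} (hR : IsUnit R) (v : ι → ℝ) : R *ᵥ (R⁻¹ *ᵥ v) = v := by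
  rw [mulVec_mulVec, mul_nonsing_inv _ ((isUnit_iff_isUnit_det R).1 hR), one_mulVec]

lemma mulVec_neg_inv_mulVec {R : Matrix ι ι ℝ} (hR : IsUnit R) (Δ : ι → ℝ) :
    R *ᵥ -(R⁻¹ *ᵥ Δ) = -Δ := by
  rw [mulVec_neg, mulVec_inv_mulVec hR]

lemma lqCost_neg_inv_mulVec {R : Matrix ι ι ℝ} (hR : IsUnit R) (Δ : ι → ℝ) :
    lqCost R Δ (-(R⁻¹ *ᵥ Δ)) = -(R⁻¹ *ᵥ Δ ⬝ᵥ Δ) := by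
  rw [lqCost_eq_of_mulVec_eq_neg (mulVec_neg_inv_mulVec hR Δ), dotProduct_neg, dotProduct_comm]

lemma l2_opNorm_inv_le_of_norm_le {A : Matrix ι ι ℝ} (hA : IsUnit A) {K : ℝ} (hK : 0 ≤ K)
    (h : ∀ x, ‖toLp 2 x‖ ≤ K * ‖toLp 2 (A *ᵥ x)‖) : ‖A⁻¹‖ ≤ K :=
  l2_opNorm_le_of_norm_mulVec_le hK fun y => by
    simpa only [mulVec_inv_mulVec hA] using h (A⁻¹ *ᵥ y)

lemma le_dotProduct_mulVec_of_posSemidef_sub {δ : ℝ} {A : Matrix ι ι ℝ}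
    (h : (A - δ • 1).PosSemidef) (x : ι → ℝ) : δ * ‖toLp 2 x‖ ^ 2 ≤ x ⬝ᵥ (A *ᵥ x) := by
  have := h.dotProduct_mulVec_nonneg x
  rw [star_trivial, sub_mulVec, smul_mulVec, one_mulVec, dotProduct_sub, dotProduct_smul,
    dotProduct_self_eq_norm_toLp_sq, smul_eq_mul] at this
  linarith

lemma mul_norm_le_norm_mulVec_of_posSemidef_sub {δ : ℝ} {A : Matrix ι ι ℝ}
    (h : (A - δ • 1).PosSemidef) (x : ι → ℝ) : δ * ‖toLp 2 x‖ ≤ ‖toLp 2 (A *ᵥ x)‖ := by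
  rcases (norm_nonneg (toLp 2 x)).eq_or_lt with hx | hx
  · rw [← hx, mul_zero]; exact norm_nonneg _
  · refine le_of_mul_le_mul_right ?_ hx
    calc δ * ‖toLp 2 x‖ * ‖toLp 2 x‖ ≤ x ⬝ᵥ (A *ᵥ x) := by
          nlinarith [le_dotProduct_mulVec_of_posSemidef_sub h x]
      _ ≤ |x ⬝ᵥ (A *ᵥ x)| := le_abs_self _
      _ ≤ _ := by rw [mul_comm]; exact abs_dotProduct_le _ _

variable {A : Matrix ι ι ℝ} {C : Matrix κ ι ℝ} {D : Matrix κ κ ℝ}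

lemma fromBlocks_mulVec_dotProduct_eq (hA : A.IsSymm) (hAu : IsUnit A) (a : ι → ℝ) (b : κ → ℝ) :
    (fromBlocks A Cᵀ C D *ᵥ Sum.elim a b) ⬝ᵥ Sum.elim a b =
      (A *ᵥ (a + (A⁻¹ * Cᵀ) *ᵥ b)) ⬝ᵥ (a + (A⁻¹ * Cᵀ) *ᵥ b) + ((D - C * A⁻¹ * Cᵀ) *ᵥ b) ⬝ᵥ b := by
  let := A.invertibleOfIsUnitDet ((isUnit_iff_isUnit_det A).1 hAu)
  have hH : A.IsHermitian := by rwa [IsHermitian, conjTranspose_eq_transpose_of_trivial]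
  have := schur_complement_eq₁₁ Cᵀ D a b hH
  simp only [star_trivial, conjTranspose_eq_transpose_of_trivial, transpose_transpose,
    ← dotProduct_mulVec] at this
  simpa only [dotProduct_comm _ (_ *ᵥ _)] using this

section SaddlePoint
variable {Δ₁ : ι → ℝ} {Δ₂ : κ → ℝ} {u : ι ⊕ κ → ℝ}

lemma lqCost_sumElim_inr_le (hA : A.IsSymm) (hD : D.IsSymm) (hAu : IsUnit A)
    (hAneg : (-A).PosSemidef) (hu : fromBlocks A Cᵀ C D *ᵥ u = -Sum.elim Δ₁ Δ₂) (v₁ : ι → ℝ) :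
    lqCost (fromBlocks A Cᵀ C D) (Sum.elim Δ₁ Δ₂) (Sum.elim v₁ (u ∘ Sum.inr)) ≤
      lqCost (fromBlocks A Cᵀ C D) (Sum.elim Δ₁ Δ₂) u := by
  have hR : (fromBlocks A Cᵀ C D).IsSymm := hA.fromBlocks (transpose_transpose C) hD
  have hvu : Sum.elim v₁ (u ∘ Sum.inr) - u = Sum.elim (v₁ - u ∘ Sum.inl) 0 := by
    ext (i | i) <;> simp
  rw [lqCost_eq_add_of_mulVec_eq_neg hR hu, hvu, fromBlocks_mulVec_dotProduct_eq hA hAu]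
  have := hAneg.dotProduct_mulVec_nonneg (v₁ - u ∘ Sum.inl)
  simp only [star_trivial, neg_mulVec, dotProduct_neg] at this
  simp only [mulVec_zero, add_zero, dotProduct_zero]
  rw [dotProduct_comm]
  linarith

lemma le_lqCost_sumElim_inl (hA : A.IsSymm) (hD : D.IsSymm) (hAu : IsUnit A)
    (hS : (D - C * A⁻¹ * Cᵀ).PosSemidef) (hu : fromBlocks A Cᵀ C D *ᵥ u = -Sum.elim Δ₁ Δ₂)
    (v₂ : κ → ℝ) :
    lqCost (fromBlocks A Cᵀ C D) (Sum.elim Δ₁ Δ₂) u ≤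
      lqCost (fromBlocks A Cᵀ C D) (Sum.elim Δ₁ Δ₂) (Sum.elim (-(A⁻¹ *ᵥ (Cᵀ *ᵥ v₂ + Δ₁))) v₂) := by
  have hR : (fromBlocks A Cᵀ C D).IsSymm := hA.fromBlocks (transpose_transpose C) hD
  have hAinv : A⁻¹ * A = 1 := nonsing_inv_mul _ ((isUnit_iff_isUnit_det A).1 hAu)
  have hu₁ : u ∘ Sum.inl = -(A⁻¹ *ᵥ (Cᵀ *ᵥ (u ∘ Sum.inr) + Δ₁)) := by
    have h : A *ᵥ (u ∘ Sum.inl) + Cᵀ *ᵥ (u ∘ Sum.inr) = -Δ₁ := by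
      ext i
      simpa [fromBlocks_mulVec] using congrFun hu (Sum.inl i)
    have hAu₁ : A *ᵥ (u ∘ Sum.inl) = -(Cᵀ *ᵥ (u ∘ Sum.inr) + Δ₁) := by
      rw [neg_add, ← h]; abel
    rw [← mulVec_neg, ← hAu₁, mulVec_mulVec, hAinv, one_mulVec]
  have hvu : Sum.elim (-(A⁻¹ *ᵥ (Cᵀ *ᵥ v₂ + Δ₁))) v₂ - u =
      Sum.elim (-((A⁻¹ * Cᵀ) *ᵥ (v₂ - u ∘ Sum.inr))) (v₂ - u ∘ Sum.inr) := by
    conv_lhs => rw [← Sum.elim_comp_inl_inr u, ← Sum.elim_sub_sub, hu₁]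
    simp only [mulVec_add, mulVec_sub, ← mulVec_mulVec]
    abel_nf
  rw [lqCost_eq_add_of_mulVec_eq_neg hR hu (Sum.elim _ v₂), hvu,
    fromBlocks_mulVec_dotProduct_eq hA hAu, neg_add_cancel, mulVec_zero, zero_dotProduct, zero_add,
    le_add_iff_nonneg_right, dotProduct_comm]
  simpa using hS.dotProduct_mulVec_nonneg (v₂ - u ∘ Sum.inr)

end SaddlePoint

variable {δ : ℝ}

lemma isUnit_of_neg_add_posSemidef (hδ : 0 < δ) (hA : (-(A + δ • 1)).PosSemidef) : IsUnit A :=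
  (IsUnit.neg_iff A).1 (posDef_of_posSemidef_sub hδ (neg_add' A _ ▸ hA)).isUnit

lemma mul_norm_le_norm_mulVec_of_neg_add_posSemidef (hA : (-(A + δ • 1)).PosSemidef)
    (x : ι → ℝ) : δ * ‖toLp 2 x‖ ≤ ‖toLp 2 (A *ᵥ x)‖ := by
  have h : (-A - δ • 1).PosSemidef := by rwa [← neg_add']
  simpa [neg_mulVec] using mul_norm_le_norm_mulVec_of_posSemidef_sub h x

lemma l2_opNorm_inv_le_of_neg_add_posSemidef (hδ : 0 < δ) (hA : (-(A + δ • 1)).PosSemidef) :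
    ‖A⁻¹‖ ≤ δ⁻¹ :=
  l2_opNorm_inv_le_of_norm_le (isUnit_of_neg_add_posSemidef hδ hA) (inv_nonneg.2 hδ.le)
    fun x => by
      rw [inv_mul_eq_div, le_div_iff₀' hδ]
      exact mul_norm_le_norm_mulVec_of_neg_add_posSemidef hA x

variable [DecidableEq κ]

lemma isUnit_fromBlocks_of_saddle (hδ : 0 < δ) (hA : (-(A + δ • 1)).PosSemidef)
    (hS : (D - C * A⁻¹ * Cᵀ - δ • 1).PosSemidef) : IsUnit (fromBlocks A Cᵀ C D) := by
  have hAu := isUnit_of_neg_add_posSemidef hδ hA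
  let := A.invertibleOfIsUnitDet ((isUnit_iff_isUnit_det A).1 hAu)
  rw [isUnit_iff_isUnit_det, det_fromBlocks₁₁, invOf_eq_nonsing_inv, IsUnit.mul_iff,
    ← isUnit_iff_isUnit_det, ← isUnit_iff_isUnit_det]
  exact ⟨hAu, (posDef_of_posSemidef_sub hδ hS).isUnit⟩

lemma l2_opNorm_le_l2_opNorm_fromBlocks₁₂ (A : Matrix ι ι ℝ) (B : Matrix ι κ ℝ)
    (C : Matrix κ ι ℝ) (D : Matrix κ κ ℝ) : ‖B‖ ≤ ‖fromBlocks A B C D‖ := by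
  refine l2_opNorm_le_of_norm_mulVec_le (norm_nonneg _) fun x => ?_
  set x₀ : ι ⊕ κ → ℝ := Sum.elim 0 x
  have hBx : B *ᵥ x = (fromBlocks A B C D *ᵥ x₀) ∘ Sum.inl := by simp [x₀, fromBlocks_mulVec]
  calc ‖toLp 2 (B *ᵥ x)‖ ≤ ‖toLp 2 (fromBlocks A B C D *ᵥ x₀)‖ := hBx ▸ norm_toLp_comp_inl_le _
    _ ≤ ‖fromBlocks A B C D‖ * ‖toLp 2 x‖ := by
        simpa only [x₀, norm_toLp_sumElim_zero_left] using norm_toLp_mulVec_le _ x₀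

lemma l2_opNorm_transpose (A : Matrix ι κ ℝ) : ‖Aᵀ‖ = ‖A‖ := by
  rw [← conjTranspose_eq_transpose_of_trivial, l2_opNorm_conjTranspose]

lemma mul_norm_le_of_saddle {M : ℝ} (hδ : 0 < δ) (hA : (-(A + δ • 1)).PosSemidef)
    (hS : (D - C * A⁻¹ * Cᵀ - δ • 1).PosSemidef) (hM : ‖fromBlocks A Cᵀ C D‖ ≤ M)
    (x : ι ⊕ κ → ℝ) :
    δ ^ 3 * ‖toLp 2 x‖ ≤ 2 * (δ + M) ^ 2 * ‖toLp 2 (fromBlocks A Cᵀ C D *ᵥ x)‖ := by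
  have hAu := (isUnit_iff_isUnit_det A).1 (isUnit_of_neg_add_posSemidef hδ hA)
  have hM₀ : 0 ≤ M := (norm_nonneg _).trans hM
  have hCt : ‖Cᵀ‖ ≤ M := (l2_opNorm_le_l2_opNorm_fromBlocks₁₂ _ _ _ _).trans hM
  have hC : ‖C‖ ≤ M := l2_opNorm_transpose C ▸ hCt
  set y := fromBlocks A Cᵀ C D *ᵥ x
  set a := x ∘ Sum.inl
  set b := x ∘ Sum.inr
  -- With `w = a + A⁻¹ Cᵀ b` the system `R (a, b) = y` reads `A w = y₁`, `S b = y₂ - C w`: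
  -- coercivity of `-A` and of `S` bounds `w`, then `b`, then `a`.
  set w := a + A⁻¹ *ᵥ (Cᵀ *ᵥ b)
  have hyx : y = Sum.elim (A *ᵥ a + Cᵀ *ᵥ b) (C *ᵥ a + D *ᵥ b) := fromBlocks_mulVec ..
  have hAw : A *ᵥ w = y ∘ Sum.inl := by
    simp [w, hyx, mulVec_add, mulVec_mulVec, ← Matrix.mul_assoc, mul_nonsing_inv _ hAu]
  have hSb : (D - C * A⁻¹ * Cᵀ) *ᵥ b = y ∘ Sum.inr - C *ᵥ w := by
    simp only [w, hyx, Sum.elim_comp_inr, sub_mulVec, mulVec_add, ← mulVec_mulVec]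
    abel
  have hw : δ * ‖toLp 2 w‖ ≤ ‖toLp 2 y‖ :=
    (mul_norm_le_norm_mulVec_of_neg_add_posSemidef hA w).trans (hAw ▸ norm_toLp_comp_inl_le y)
  have hb : δ * ‖toLp 2 b‖ ≤ ‖toLp 2 y‖ + M * ‖toLp 2 w‖ := calc
    δ * ‖toLp 2 b‖ ≤ ‖toLp 2 (y ∘ Sum.inr) - toLp 2 (C *ᵥ w)‖ := by
      rw [← toLp_sub, ← hSb]; exact mul_norm_le_norm_mulVec_of_posSemidef_sub hS b
    _ ≤ ‖toLp 2 (y ∘ Sum.inr)‖ + ‖toLp 2 (C *ᵥ w)‖ := norm_sub_le _ _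
    _ ≤ ‖toLp 2 y‖ + M * ‖toLp 2 w‖ := add_le_add (norm_toLp_comp_inr_le y) <|
      (norm_toLp_mulVec_le C w).trans (mul_le_mul_of_nonneg_right hC (norm_nonneg _))
  have ha : δ * ‖toLp 2 a‖ ≤ δ * ‖toLp 2 w‖ + M * ‖toLp 2 b‖ := calc
    δ * ‖toLp 2 a‖ = δ * ‖toLp 2 w - toLp 2 (A⁻¹ *ᵥ (Cᵀ *ᵥ b))‖ := by simp [w]
    _ ≤ δ * ‖toLp 2 w‖ + δ * ‖toLp 2 (A⁻¹ *ᵥ (Cᵀ *ᵥ b))‖ := by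
      rw [← mul_add]; exact mul_le_mul_of_nonneg_left (norm_sub_le _ _) hδ.le
    _ ≤ δ * ‖toLp 2 w‖ + ‖toLp 2 (Cᵀ *ᵥ b)‖ := by
      have := mul_norm_le_norm_mulVec_of_neg_add_posSemidef hA (A⁻¹ *ᵥ (Cᵀ *ᵥ b))
      rw [mulVec_inv_mulVec (isUnit_of_neg_add_posSemidef hδ hA)] at this
      linarith
    _ ≤ δ * ‖toLp 2 w‖ + M * ‖toLp 2 b‖ := add_le_add le_rfl <|
      (norm_toLp_mulVec_le _ _).trans (mul_le_mul_of_nonneg_right hCt (norm_nonneg _))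
  have hx : ‖toLp 2 x‖ ≤ ‖toLp 2 a‖ + ‖toLp 2 b‖ := norm_toLp_le_add x
  have hδM : 0 ≤ δ * (δ + M) := by positivity
  nlinarith [mul_le_mul_of_nonneg_left hx (by positivity : (0 : ℝ) ≤ δ ^ 3),
    mul_le_mul_of_nonneg_left ha (sq_nonneg δ), mul_le_mul_of_nonneg_left hb hδM,
    mul_le_mul_of_nonneg_left hw (sq_nonneg δ),
    mul_le_mul_of_nonneg_left hw (by positivity : (0 : ℝ) ≤ (δ + M) * M),
    mul_nonneg (by positivity : (0 : ℝ) ≤ M * (2 * δ + M)) (norm_nonneg (toLp 2 y))]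

lemma l2_opNorm_inv_fromBlocks_le {M : ℝ} (hδ : 0 < δ) (hA : (-(A + δ • 1)).PosSemidef)
    (hS : (D - C * A⁻¹ * Cᵀ - δ • 1).PosSemidef) (hM : ‖fromBlocks A Cᵀ C D‖ ≤ M) :
    ‖(fromBlocks A Cᵀ C D)⁻¹‖ ≤ 2 * (δ + M) ^ 2 / δ ^ 3 := by
  have hM₀ : 0 ≤ M := (norm_nonneg _).trans hM
  refine l2_opNorm_inv_le_of_norm_le (isUnit_fromBlocks_of_saddle hδ hA hS) (by positivity)
    fun x => ?_
  rw [div_mul_eq_mul_div, le_div_iff₀' (by positivity)]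
  exact mul_norm_le_of_saddle hδ hA hS hM x

lemma lqCost_fromBlocks_saddle (hδ : 0 < δ) (hA : A.IsSymm) (hD : D.IsSymm)
    (hneg : (-(A + δ • 1)).PosSemidef) (hS : (D - C * A⁻¹ * Cᵀ - δ • 1).PosSemidef)
    (Δ₁ : ι → ℝ) (Δ₂ : κ → ℝ) :
    let R := fromBlocks A Cᵀ C D
    let u := -(R⁻¹ *ᵥ Sum.elim Δ₁ Δ₂)
    (∀ v₁, lqCost R (Sum.elim Δ₁ Δ₂) (Sum.elim v₁ (u ∘ Sum.inr)) ≤ lqCost R (Sum.elim Δ₁ Δ₂) u) ∧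
      ∀ v₂, lqCost R (Sum.elim Δ₁ Δ₂) u ≤
        lqCost R (Sum.elim Δ₁ Δ₂) (Sum.elim (-(A⁻¹ *ᵥ (Cᵀ *ᵥ v₂ + Δ₁))) v₂) := by
  intro R u
  have hAu := isUnit_of_neg_add_posSemidef hδ hneg
  have hu : R *ᵥ u = -Sum.elim Δ₁ Δ₂ :=
    mulVec_neg_inv_mulVec (isUnit_fromBlocks_of_saddle hδ hneg hS) _
  exact ⟨lqCost_sumElim_inr_le hA hD hAu (posSemidef_neg_of_neg_add_posSemidef hδ hneg) hu,
    le_lqCost_sumElim_inl hA hD hAu (posDef_of_posSemidef_sub hδ hS).posSemidef hu⟩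

end Matrix

namespace MeasureTheory

variable {α : Type*} [MeasurableSpace α] {μ : Measure α} {ι κ : Type*} {p : ENNReal}

lemma _root_.Matrix.measurable_fromBlocks_apply {ι' κ' : Type*} {A : α → Matrix ι ι' ℝ}
    {B : α → Matrix ι κ' ℝ} {C : α → Matrix κ ι' ℝ} {D : α → Matrix κ κ' ℝ}
    (hA : ∀ i j, Measurable fun t => A t i j) (hB : ∀ i j, Measurable fun t => B t i j)
    (hC : ∀ i j, Measurable fun t => C t i j) (hD : ∀ i j, Measurable fun t => D t i j) :
    ∀ i j, Measurable fun t => fromBlocks (A t) (B t) (C t) (D t) i j := by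
  rintro (i | i) (j | j)
  exacts [hA i j, hB i j, hC i j, hD i j]

variable [Fintype ι] [Fintype κ]

lemma _root_.Matrix.measurable_inv_apply [DecidableEq ι] {f : α → Matrix ι ι ℝ}
    (hf : ∀ i j, Measurable fun t => f t i j) (i j : ι) : Measurable fun t => (f t)⁻¹ i j := by
  -- `Matrix` carries no measurable structure: pass through the plain function type.
  have hf' : Measurable fun t => Matrix.of.symm (f t) :=
    measurable_pi_iff.2 fun i => measurable_pi_iff.2 (hf i)
  have hdet : Continuous fun M : ι → ι → ℝ => (Matrix.of M).det := by fun_prop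
  have hadj : Continuous fun M : ι → ι → ℝ => (Matrix.of M).adjugate i j :=
    (continuous_apply_apply i j).comp (continuous_id (X := Matrix ι ι ℝ)).matrix_adjugate
  simp_rw [inv_def, Matrix.smul_apply, Ring.inverse_eq_inv', smul_eq_mul]
  exact (hdet.measurable.comp hf').inv.mul (hadj.measurable.comp hf')

lemma memLp_toLp_iff {f : α → ι → ℝ} :
    MemLp (fun t => toLp 2 (f t)) p μ ↔ MemLp f p μ := by
  rw [memLp_piLp_iff, memLp_pi_iff]

lemma MemLp.sumElim {x : α → ι → ℝ} {y : α → κ → ℝ} (hx : MemLp x p μ) (hy : MemLp y p μ) :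
    MemLp (fun t => Sum.elim (x t) (y t)) p μ :=
  memLp_pi_iff.2 <| by rintro (i | i) <;> simp [memLp_pi_iff.1 hx, memLp_pi_iff.1 hy]

lemma MemLp.comp_inl {x : α → ι ⊕ κ → ℝ} (hx : MemLp x p μ) :
    MemLp (fun t => x t ∘ Sum.inl) p μ :=
  memLp_pi_iff.2 fun i => memLp_pi_iff.1 hx (Sum.inl i)

lemma MemLp.comp_inr {x : α → ι ⊕ κ → ℝ} (hx : MemLp x p μ) :
    MemLp (fun t => x t ∘ Sum.inr) p μ :=
  memLp_pi_iff.2 fun i => memLp_pi_iff.1 hx (Sum.inr i)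

lemma MemLp.integrable_dotProduct {x y : α → ι → ℝ} (hx : MemLp x 2 μ) (hy : MemLp y 2 μ) :
    Integrable (fun t => x t ⬝ᵥ y t) μ := by
  simp only [dotProduct]
  exact integrable_finsetSum _ fun i _ =>
    (memLp_pi_iff.1 hx i).integrable_mul (memLp_pi_iff.1 hy i)

lemma AEStronglyMeasurable.mulVec {A : α → Matrix ι κ ℝ} (hA : ∀ i j, Measurable fun t => A t i j)
    {v : α → κ → ℝ} (hv : AEStronglyMeasurable v μ) :
    AEStronglyMeasurable (fun t => A t *ᵥ v t) μ := by
  refine (aemeasurable_pi_iff.2 fun i => ?_).aestronglyMeasurable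
  change AEMeasurable (fun t => ∑ j, A t i j * v t j) μ
  exact Finset.aemeasurable_fun_sum _ fun j _ =>
    (hA i j).aemeasurable.mul ((measurable_pi_apply j).comp_aemeasurable hv.aemeasurable)

lemma MemLp.mulVec_of_norm_le [DecidableEq κ] {A : α → Matrix ι κ ℝ}
    (hA : ∀ i j, Measurable fun t => A t i j) {c : ℝ} (hAc : ∀ᵐ t ∂μ, ‖A t‖ ≤ c)
    {v : α → κ → ℝ} (hv : MemLp v p μ) : MemLp (fun t => A t *ᵥ v t) p μ := by
  have hAv := hv.aestronglyMeasurable.mulVec hA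
  rw [← memLp_toLp_iff] at hv ⊢
  refine hv.of_le_mul (c := c) ((PiLp.continuous_toLp 2 _).comp_aestronglyMeasurable hAv) ?_
  filter_upwards [hAc] with t ht
  exact (norm_toLp_mulVec_le _ _).trans (mul_le_mul_of_nonneg_right ht (norm_nonneg _))

lemma integrable_lqCost [DecidableEq ι] {R : α → Matrix ι ι ℝ}
    (hR : ∀ i j, Measurable fun t => R t i j) {M : ℝ} (hRM : ∀ᵐ t ∂μ, ‖R t‖ ≤ M)
    {Δ v : α → ι → ℝ} (hΔ : MemLp Δ 2 μ) (hv : MemLp v 2 μ) :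
    Integrable (fun t => lqCost (R t) (Δ t) (v t)) μ :=
  ((hv.mulVec_of_norm_le hR hRM).integrable_dotProduct hv).add
    ((hΔ.integrable_dotProduct hv).const_mul 2)

lemma integral_lqCost_mono [DecidableEq ι] {R : α → Matrix ι ι ℝ}
    (hR : ∀ i j, Measurable fun t => R t i j) {M : ℝ} (hRM : ∀ᵐ t ∂μ, ‖R t‖ ≤ M)
    {Δ v w : α → ι → ℝ} (hΔ : MemLp Δ 2 μ) (hv : MemLp v 2 μ) (hw : MemLp w 2 μ)
    (h : ∀ᵐ t ∂μ, lqCost (R t) (Δ t) (v t) ≤ lqCost (R t) (Δ t) (w t)) :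
    ∫ t, lqCost (R t) (Δ t) (v t) ∂μ ≤ ∫ t, lqCost (R t) (Δ t) (w t) ∂μ :=
  integral_mono_ae (integrable_lqCost hR hRM hΔ hv) (integrable_lqCost hR hRM hΔ hw) h

section Saddle
variable [DecidableEq ι] [DecidableEq κ] {A : α → Matrix ι ι ℝ} {C : α → Matrix κ ι ℝ}
  {D : α → Matrix κ κ ℝ} {δ M : ℝ}

lemma MemLp.neg_inv_fromBlocks_mulVec (hA : ∀ i j, Measurable fun t => A t i j)
    (hC : ∀ i j, Measurable fun t => C t i j) (hD : ∀ i j, Measurable fun t => D t i j)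
    (hδ : 0 < δ) (hneg : ∀ᵐ t ∂μ, (-(A t + δ • 1)).PosSemidef)
    (hS : ∀ᵐ t ∂μ, (D t - C t * (A t)⁻¹ * (C t)ᵀ - δ • 1).PosSemidef)
    (hM : ∀ᵐ t ∂μ, ‖fromBlocks (A t) (C t)ᵀ (C t) (D t)‖ ≤ M) {Δ : α → ι ⊕ κ → ℝ}
    (hΔ : MemLp Δ 2 μ) :
    MemLp (fun t => -((fromBlocks (A t) (C t)ᵀ (C t) (D t))⁻¹ *ᵥ Δ t)) 2 μ :=
  .neg <| hΔ.mulVec_of_norm_le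
    (measurable_inv_apply (measurable_fromBlocks_apply hA (fun i j => hC j i) hC hD)) <| by
      filter_upwards [hneg, hS, hM] with t using l2_opNorm_inv_fromBlocks_le hδ

lemma MemLp.neg_inv_mulVec_transpose_mulVec_add (hA : ∀ i j, Measurable fun t => A t i j)
    (hC : ∀ i j, Measurable fun t => C t i j) (hδ : 0 < δ)
    (hneg : ∀ᵐ t ∂μ, (-(A t + δ • 1)).PosSemidef) (hCM : ∀ᵐ t ∂μ, ‖(C t)ᵀ‖ ≤ M)
    {Δ₁ : α → ι → ℝ} (hΔ₁ : MemLp Δ₁ 2 μ) {v : α → κ → ℝ} (hv : MemLp v 2 μ) :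
    MemLp (fun t => -((A t)⁻¹ *ᵥ ((C t)ᵀ *ᵥ v t + Δ₁ t))) 2 μ :=
  .neg <| ((hv.mulVec_of_norm_le (fun i j => hC j i) hCM).add hΔ₁).mulVec_of_norm_le
    (measurable_inv_apply hA) <| by
      filter_upwards [hneg] with t using l2_opNorm_inv_le_of_neg_add_posSemidef hδ

end Saddle

end MeasureTheory

theorem stmt_17_general (T δ M : ℝ) (hδ : 0 < δ)
    (k₁ k₂ : ℕ)
    (R₁₁ : ℝ → Matrix (Fin k₁) (Fin k₁) ℝ)
    (R₂₂ : ℝ → Matrix (Fin k₂) (Fin k₂) ℝ)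
    (R₂₁ : ℝ → Matrix (Fin k₂) (Fin k₁) ℝ)
    (hmeas₁₁ : ∀ i j, Measurable (fun t => R₁₁ t i j))
    (hmeas₂₂ : ∀ i j, Measurable (fun t => R₂₂ t i j))
    (hmeas₂₁ : ∀ i j, Measurable (fun t => R₂₁ t i j))
    (R : ℝ → Matrix (Fin k₁ ⊕ Fin k₂) (Fin k₁ ⊕ Fin k₂) ℝ)
    (hR : ∀ t, R t = Matrix.fromBlocks (R₁₁ t) (R₂₁ t)ᵀ (R₂₁ t) (R₂₂ t))
    (hsymm : ∀ᵐ t ∂(volume.restrict (Set.Icc (0 : ℝ) T)),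
      (R₁₁ t).IsSymm ∧ (R₂₂ t).IsSymm)
    (hbound : ∀ᵐ t ∂(volume.restrict (Set.Icc (0 : ℝ) T)), ‖R t‖ ≤ M)
    (hneg : ∀ᵐ t ∂(volume.restrict (Set.Icc (0 : ℝ) T)),
      (-(R₁₁ t + δ • (1 : Matrix (Fin k₁) (Fin k₁) ℝ))).PosSemidef)
    (hpos : ∀ᵐ t ∂(volume.restrict (Set.Icc (0 : ℝ) T)),
      ((R₂₂ t - R₂₁ t * (R₁₁ t)⁻¹ * (R₂₁ t)ᵀ)
        - δ • (1 : Matrix (Fin k₂) (Fin k₂) ℝ)).PosSemidef)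
    (Δ₁ : ℝ → (Fin k₁ → ℝ)) (Δ₂ : ℝ → (Fin k₂ → ℝ))
    (Δ : ℝ → (Fin k₁ ⊕ Fin k₂ → ℝ)) (hΔ : ∀ t, Δ t = Sum.elim (Δ₁ t) (Δ₂ t))
    (hΔL2 : MemLp Δ 2 (volume.restrict (Set.Icc (0 : ℝ) T)))
    (F : (ℝ → (Fin k₁ → ℝ)) → (ℝ → (Fin k₂ → ℝ)) → ℝ)
    (hF : ∀ u₁ u₂, F u₁ u₂ = ∫ t in Set.Icc (0 : ℝ) T,
      ((R t).mulVec (Sum.elim (u₁ t) (u₂ t)) ⬝ᵥ Sum.elim (u₁ t) (u₂ t)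
        + 2 * (Δ t ⬝ᵥ Sum.elim (u₁ t) (u₂ t))))
    (ustar : ℝ → (Fin k₁ ⊕ Fin k₂ → ℝ)) (hustar : ∀ t, ustar t = -((R t)⁻¹.mulVec (Δ t)))
    (u₁star : ℝ → (Fin k₁ → ℝ)) (hu₁star : ∀ t, u₁star t = ustar t ∘ Sum.inl)
    (u₂star : ℝ → (Fin k₂ → ℝ)) (hu₂star : ∀ t, u₂star t = ustar t ∘ Sum.inr) :
    (∀ᵐ t ∂(volume.restrict (Set.Icc (0 : ℝ) T)), IsUnit (R t))
    ∧ MemLp ustar 2 (volume.restrict (Set.Icc (0 : ℝ) T))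
    ∧ (∀ (u₁ : ℝ → (Fin k₁ → ℝ)) (u₂ : ℝ → (Fin k₂ → ℝ)),
        MemLp u₁ 2 (volume.restrict (Set.Icc (0 : ℝ) T)) →
        MemLp u₂ 2 (volume.restrict (Set.Icc (0 : ℝ) T)) →
        F u₁ u₂star ≤ F u₁star u₂star
        ∧ F u₁star u₂star
            ≤ F (fun t => -((R₁₁ t)⁻¹.mulVec ((R₂₁ t)ᵀ.mulVec (u₂ t) + Δ₁ t))) u₂)
    ∧ F u₁star u₂star = -∫ t in Set.Icc (0 : ℝ) T, (R t)⁻¹.mulVec (Δ t) ⬝ᵥ Δ t := by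
  obtain rfl : R = _ := funext hR
  obtain rfl : Δ = _ := funext hΔ
  obtain rfl : ustar = _ := funext hustar
  obtain rfl : u₁star = _ := funext hu₁star
  obtain rfl : u₂star = _ := funext hu₂star
  set μ := volume.restrict (Set.Icc (0 : ℝ) T)
  set u := fun t => -((fromBlocks (R₁₁ t) (R₂₁ t)ᵀ (R₂₁ t) (R₂₂ t))⁻¹ *ᵥ Sum.elim (Δ₁ t) (Δ₂ t))
  have hRmeas : ∀ i j, Measurable fun t => fromBlocks (R₁₁ t) (R₂₁ t)ᵀ (R₂₁ t) (R₂₂ t) i j :=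
    measurable_fromBlocks_apply hmeas₁₁ (fun i j => hmeas₂₁ j i) hmeas₂₁ hmeas₂₂
  have huL2 : MemLp u 2 μ :=
    hΔL2.neg_inv_fromBlocks_mulVec hmeas₁₁ hmeas₂₁ hmeas₂₂ hδ hneg hpos hbound
  have hCt : ∀ᵐ t ∂μ, ‖(R₂₁ t)ᵀ‖ ≤ M := by
    filter_upwards [hbound] with t using (l2_opNorm_le_l2_opNorm_fromBlocks₁₂ _ _ _ _).trans
  have helim : ∀ t, Sum.elim (u t ∘ Sum.inl) (u t ∘ Sum.inr) = u t :=
    fun t => Sum.elim_comp_inl_inr _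
  simp only [hF]
  refine ⟨?_, huL2, fun u₁ u₂ hu₁ hu₂ => ⟨?_, ?_⟩, ?_⟩
  · filter_upwards [hneg, hpos] with t using isUnit_fromBlocks_of_saddle hδ
  · refine integral_lqCost_mono hRmeas hbound hΔL2 (hu₁.sumElim huL2.comp_inr)
      (huL2.comp_inl.sumElim huL2.comp_inr) ?_
    filter_upwards [hsymm, hneg, hpos] with t hs hA hS
    rw [helim]
    exact (lqCost_fromBlocks_saddle hδ hs.1 hs.2 hA hS _ _).1 (u₁ t)
  · have hv₁ := hΔL2.comp_inl.neg_inv_mulVec_transpose_mulVec_add hmeas₁₁ hmeas₂₁ hδ hneg hCt hu₂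
    refine integral_lqCost_mono hRmeas hbound hΔL2 (huL2.comp_inl.sumElim huL2.comp_inr)
      (hv₁.sumElim hu₂) ?_
    filter_upwards [hsymm, hneg, hpos] with t hs hA hS
    rw [helim]
    exact (lqCost_fromBlocks_saddle hδ hs.1 hs.2 hA hS _ _).2 (u₂ t)
  · rw [← integral_neg]
    refine integral_congr_ae ?_
    filter_upwards [hneg, hpos] with t hA hS
    rw [helim]
    exact lqCost_neg_inv_mulVec (isUnit_fromBlocks_of_saddle hδ hA hS) _

/-- Deterministic L² form of the saddle point property from the completion-of-squares
argument of Section 5 and Theorem 1 of the paper: if the measurable symmetric block matrix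
function `R(t) = [[R₁₁(t), R₂₁(t)ᵀ],[R₂₁(t), R₂₂(t)]]` satisfies, a.e. on `[0,T]`,
`‖R(t)‖ ≤ M`, `R₁₁(t) + δI` negative semidefinite and `S₁(t) − δI` positive semidefinite,
and `Δ ∈ L²(0,T;ℝᵏ)`, then `R(t)` is invertible a.e., `u*(t) = −R(t)⁻¹Δ(t)` is in `L²`,
and `u* = (u₁*, u₂*)` is a saddle point of
`F(u₁,u₂) = ∫₀ᵀ (⟨R(t)u(t), u(t)⟩ + 2⟨Δ(t), u(t)⟩) dt` over `L²` controls, with value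
`F(u₁*, u₂*) = −∫₀ᵀ ⟨R(t)⁻¹Δ(t), Δ(t)⟩ dt`. -/
theorem stmt_17 (T δ M : ℝ) (hT : 0 < T) (hδ : 0 < δ) (hM : 0 < M)
    (k₁ k₂ : ℕ) (hk₁ : 0 < k₁) (hk₂ : 0 < k₂)
    (R₁₁ : ℝ → Matrix (Fin k₁) (Fin k₁) ℝ)
    (R₂₂ : ℝ → Matrix (Fin k₂) (Fin k₂) ℝ)
    (R₂₁ : ℝ → Matrix (Fin k₂) (Fin k₁) ℝ)
    (hmeas₁₁ : ∀ i j, Measurable (fun t => R₁₁ t i j))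
    (hmeas₂₂ : ∀ i j, Measurable (fun t => R₂₂ t i j))
    (hmeas₂₁ : ∀ i j, Measurable (fun t => R₂₁ t i j))
    (R : ℝ → Matrix (Fin k₁ ⊕ Fin k₂) (Fin k₁ ⊕ Fin k₂) ℝ)
    (hR : ∀ t, R t = Matrix.fromBlocks (R₁₁ t) (R₂₁ t)ᵀ (R₂₁ t) (R₂₂ t))
    (hsymm : ∀ᵐ t ∂(volume.restrict (Set.Icc (0 : ℝ) T)),
      (R₁₁ t).IsSymm ∧ (R₂₂ t).IsSymm)
    (hbound : ∀ᵐ t ∂(volume.restrict (Set.Icc (0 : ℝ) T)), ‖R t‖ ≤ M)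
    (hneg : ∀ᵐ t ∂(volume.restrict (Set.Icc (0 : ℝ) T)),
      (-(R₁₁ t + δ • (1 : Matrix (Fin k₁) (Fin k₁) ℝ))).PosSemidef)
    (hpos : ∀ᵐ t ∂(volume.restrict (Set.Icc (0 : ℝ) T)),
      ((R₂₂ t - R₂₁ t * (R₁₁ t)⁻¹ * (R₂₁ t)ᵀ)
        - δ • (1 : Matrix (Fin k₂) (Fin k₂) ℝ)).PosSemidef)
    (Δ₁ : ℝ → (Fin k₁ → ℝ)) (Δ₂ : ℝ → (Fin k₂ → ℝ))
    (Δ : ℝ → (Fin k₁ ⊕ Fin k₂ → ℝ)) (hΔ : ∀ t, Δ t = Sum.elim (Δ₁ t) (Δ₂ t))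
    (hΔL2 : MemLp Δ 2 (volume.restrict (Set.Icc (0 : ℝ) T)))
    (F : (ℝ → (Fin k₁ → ℝ)) → (ℝ → (Fin k₂ → ℝ)) → ℝ)
    (hF : ∀ u₁ u₂, F u₁ u₂ = ∫ t in Set.Icc (0 : ℝ) T,
      ((R t).mulVec (Sum.elim (u₁ t) (u₂ t)) ⬝ᵥ Sum.elim (u₁ t) (u₂ t)
        + 2 * (Δ t ⬝ᵥ Sum.elim (u₁ t) (u₂ t))))
    (ustar : ℝ → (Fin k₁ ⊕ Fin k₂ → ℝ)) (hustar : ∀ t, ustar t = -((R t)⁻¹.mulVec (Δ t)))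
    (u₁star : ℝ → (Fin k₁ → ℝ)) (hu₁star : ∀ t, u₁star t = ustar t ∘ Sum.inl)
    (u₂star : ℝ → (Fin k₂ → ℝ)) (hu₂star : ∀ t, u₂star t = ustar t ∘ Sum.inr) :
    (∀ᵐ t ∂(volume.restrict (Set.Icc (0 : ℝ) T)), IsUnit (R t))
    ∧ MemLp ustar 2 (volume.restrict (Set.Icc (0 : ℝ) T))
    ∧ (∀ (u₁ : ℝ → (Fin k₁ → ℝ)) (u₂ : ℝ → (Fin k₂ → ℝ)),
        MemLp u₁ 2 (volume.restrict (Set.Icc (0 : ℝ) T)) →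
        MemLp u₂ 2 (volume.restrict (Set.Icc (0 : ℝ) T)) →
        F u₁ u₂star ≤ F u₁star u₂star
        ∧ F u₁star u₂star
            ≤ F (fun t => -((R₁₁ t)⁻¹.mulVec ((R₂₁ t)ᵀ.mulVec (u₂ t) + Δ₁ t))) u₂)
    ∧ F u₁star u₂star = -∫ t in Set.Icc (0 : ℝ) T, (R t)⁻¹.mulVec (Δ t) ⬝ᵥ Δ t :=
  stmt_17_general T δ M hδ k₁ k₂ R₁₁ R₂₂ R₂₁ hmeas₁₁ hmeas₂₂ hmeas₂₁ R hR hsymm hbound hneg hpos Δ₁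
    Δ₂ Δ hΔ hΔL2 F hF ustar hustar u₁star hu₁star u₂star hu₂star
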